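/- If a convex body C in Euclidean d-space is covered by finitely many planks P_1, ..., P_n (i.e., C ⊆ P_1 ∪ ... ∪ P_n), then the sum of the widths of the planks is at least the minimal width of C: w(P_1) + ... + w(P_n) ≥ w(C). -/

import Mathlib

/-!
Bang's argument. Suppose `∑ wᵢ < w(C)` and enlarge the widths to `rᵢ = wᵢ + δ` keeping
`∑ rᵢ < w(C)`; let `sᵢ = rᵢ uᵢ`, with `uᵢ` the unit normal and `cᵢ` a centre of the `i`-th plank.

* If every width of `K` is at least `ω` and `‖s‖ < ω`, then every width of `K ∩ (K - s)` is at
  least `ω - ‖s‖`. This rests on the support function of an intersection being the infimal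
  convolution `h_{K ∩ B}(v) = inf_{a + b = v} (h_K(a) + h_B(b))`, which comes from separating
  `K × B` from a half of the diagonal in `E × E`. Eroding `C` successively by `s₁, …, sₙ` gives
  a point `x` with `x + ∑_{i ∈ S} sᵢ ∈ C` for every `S`.
* Among these `2ⁿ` points `y_S`, one maximising `‖y_S‖² - 2 ∑_{i ∈ S} ⟪cᵢ, sᵢ⟫` lies in no plank:
  adding or removing `i` changes this quantity by `‖sᵢ‖² ± 2 ⟪y_S - cᵢ, sᵢ⟫`, so at a maximum
  `|⟪y_S - cᵢ, uᵢ⟫| ≥ rᵢ / 2 > wᵢ / 2`.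
-/

open scoped RealInnerProductSpace

/-- The width of a set `C` in direction `u`. -/
noncomputable def dirWidth {d : ℕ} (C : Set (EuclideanSpace ℝ (Fin d)))
    (u : EuclideanSpace ℝ (Fin d)) : ℝ :=
  sSup ((fun x => ⟪x, u⟫) '' C) - sInf ((fun x => ⟪x, u⟫) '' C)

/-- The minimal width of a set `C`: the infimum of the widths over all unit directions. -/
noncomputable def minWidth {d : ℕ} (C : Set (EuclideanSpace ℝ (Fin d))) : ℝ :=
  ⨅ u : {v : EuclideanSpace ℝ (Fin d) // ‖v‖ = 1}, dirWidth C u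

/-- `P` is a plank of width `w`: the set of points between two parallel hyperplanes
at distance `w`. -/
def IsPlank {d : ℕ} (P : Set (EuclideanSpace ℝ (Fin d))) (w : ℝ) : Prop :=
  0 < w ∧ ∃ (u c : EuclideanSpace ℝ (Fin d)), ‖u‖ = 1 ∧
    P = {x | |⟪x - c, u⟫| ≤ w / 2}

open Set
open scoped Pointwise

theorem IsCompact.preimage_add_right {G : Type*} [TopologicalSpace G] [AddGroup G]
    [ContinuousAdd G] {K : Set G} (hK : IsCompact K) (s : G) : IsCompact ((· + s) ⁻¹' K) :=
  (Homeomorph.addRight s).isCompact_preimage.2 hK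

theorem nonneg_of_forall_lt_add_mul {a b e : ℝ} (h : ∀ t, 0 ≤ t → e < a + t * b) : 0 ≤ b := by
  by_contra! hb
  have := h ((e - a) / b) (div_nonneg_of_nonpos (by linarith [h 0 le_rfl]) hb.le)
  rw [div_mul_cancel₀ _ hb.ne] at this
  linarith

theorem exists_pos_sum_add_lt {ι : Type*} [Fintype ι] {f : ι → ℝ} {a : ℝ}
    (h : ∑ i, f i < a) : ∃ δ > 0, ∑ i, (f i + δ) < a := by
  have hn : (0 : ℝ) < Fintype.card ι + 1 := by positivity
  refine ⟨(a - ∑ i, f i) / (Fintype.card ι + 1), div_pos (by linarith) hn, ?_⟩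
  rw [Finset.sum_add_distrib, Finset.sum_const, Finset.card_univ, nsmul_eq_mul, mul_div,
    ← lt_sub_iff_add_lt', div_lt_iff₀ hn]
  nlinarith

section InnerProductSpace

variable {E : Type*} [NormedAddCommGroup E] [InnerProductSpace ℝ E]

noncomputable def supportFun (K : Set E) (y : E) : ℝ :=
  sSup ((fun x => ⟪x, y⟫) '' K)

noncomputable def width (K : Set E) (y : E) : ℝ :=
  supportFun K y + supportFun K (-y)

variable {K : Set E}

theorem inner_le_supportFun (hK : IsCompact K) {x : E} (hx : x ∈ K) (y : E) :
    ⟪x, y⟫ ≤ supportFun K y :=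
  le_csSup (hK.image (continuous_id.inner continuous_const)).bddAbove (mem_image_of_mem _ hx)

theorem supportFun_le (hne : K.Nonempty) {y : E} {r : ℝ} (h : ∀ x ∈ K, ⟪x, y⟫ ≤ r) :
    supportFun K y ≤ r :=
  csSup_le (hne.image _) (forall_mem_image.2 h)

theorem supportFun_add_le (hK : IsCompact K) (hne : K.Nonempty) (y z : E) :
    supportFun K (y + z) ≤ supportFun K y + supportFun K z :=
  supportFun_le hne fun x hx => by
    rw [inner_add_right]
    exact add_le_add (inner_le_supportFun hK hx y) (inner_le_supportFun hK hx z)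

theorem supportFun_smul (K : Set E) {r : ℝ} (hr : 0 ≤ r) (y : E) :
    supportFun K (r • y) = r * supportFun K y := by
  have : (fun x => ⟪x, r • y⟫) '' K = r • ((fun x => ⟪x, y⟫) '' K) := by
    rw [← image_smul, image_image]
    simp only [real_inner_smul_right, smul_eq_mul]
  rw [supportFun, this, Real.sSup_smul_of_nonneg hr, smul_eq_mul, supportFun]

theorem supportFun_preimage_add (hK : IsCompact K) (hne : K.Nonempty) (s y : E) :
    supportFun ((· + s) ⁻¹' K) y = supportFun K y - ⟪s, y⟫ := by
  have hne' : ((· + s) ⁻¹' K).Nonempty := by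
    obtain ⟨x, hx⟩ := hne
    exact ⟨x - s, by simpa using hx⟩
  refine le_antisymm (supportFun_le hne' fun x hx => ?_) ?_
  · have := inner_le_supportFun hK hx y
    rw [inner_add_left] at this
    linarith
  · refine sub_le_iff_le_add.2 (supportFun_le hne fun x hx => ?_)
    have := inner_le_supportFun (hK.preimage_add_right s)
      (show x - s + s ∈ K by simpa using hx) y
    rw [inner_sub_left] at this
    linarith

theorem width_smul (K : Set E) {r : ℝ} (hr : 0 ≤ r) (y : E) :
    width K (r • y) = r * width K y := by
  rw [width, width, ← smul_neg, supportFun_smul K hr, supportFun_smul K hr, mul_add]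

theorem width_nonneg (hK : IsCompact K) (hne : K.Nonempty) (y : E) : 0 ≤ width K y := by
  obtain ⟨x, hx⟩ := hne
  have h₁ := inner_le_supportFun hK hx y
  have h₂ := inner_le_supportFun hK hx (-y)
  rw [inner_neg_right] at h₂
  rw [width]
  linarith

theorem mul_norm_le_width {ω : ℝ} (hw : ∀ u : E, ‖u‖ = 1 → ω ≤ width K u) (p : E) :
    ω * ‖p‖ ≤ width K p := by
  rcases eq_or_ne p 0 with rfl | hp
  · simpa using (width_smul K le_rfl (0 : E)).ge
  have hpos : 0 < ‖p‖ := norm_pos_iff.2 hp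
  have hunit : ‖‖p‖⁻¹ • p‖ = 1 := by rw [norm_smul, norm_inv, norm_norm, inv_mul_cancel₀ hpos.ne']
  calc ω * ‖p‖ ≤ width K (‖p‖⁻¹ • p) * ‖p‖ := mul_le_mul_of_nonneg_right (hw _ hunit) hpos.le
    _ = width K p := by
      rw [width_smul K (inv_nonneg.2 hpos.le), mul_comm, ← mul_assoc, mul_inv_cancel₀ hpos.ne',
        one_mul]

theorem exists_nonneg_eq_smul_of_lt_inner {v g : E} (hv : v ≠ 0) {c e : ℝ}
    (h : ∀ z, c ≤ ⟪z, v⟫ → e < ⟪z, g⟫) : ∃ r, 0 ≤ r ∧ g = r • v ∧ e < r * c := by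
  have hvv : ⟪v, v⟫ ≠ 0 := inner_self_ne_zero.2 hv
  set z₀ := (c / ⟪v, v⟫) • v
  have hz₀ : ⟪z₀, v⟫ = c := by rw [real_inner_smul_left, div_mul_cancel₀ _ hvv]
  have slope : ∀ y, ⟪y, v⟫ = 0 → 0 ≤ ⟪y, g⟫ := fun y hy =>
    nonneg_of_forall_lt_add_mul fun t _ => by
      simpa [inner_add_left, real_inner_smul_left, hy, hz₀] using h (z₀ + t • y)
  have horth : ∀ y, ⟪y, v⟫ = 0 → ⟪y, g⟫ = 0 := fun y hy => by
    have := slope (-y) (by simp [hy])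
    rw [inner_neg_left] at this
    exact le_antisymm (by linarith) (slope y hy)
  obtain ⟨r, hg⟩ : ∃ r : ℝ, g = r • v := by
    set r := ⟪v, g⟫ / ⟪v, v⟫
    have hperp : ⟪g - r • v, v⟫ = 0 := by
      rw [inner_sub_left, real_inner_smul_left, real_inner_comm, div_mul_cancel₀ _ hvv, sub_self]
    have : ⟪g - r • v, g - r • v⟫ = 0 := by
      rw [inner_sub_right, real_inner_smul_right, hperp, horth _ hperp, mul_zero, sub_zero]
    exact ⟨r, sub_eq_zero.1 (inner_self_eq_zero.1 this)⟩
  have hr : 0 ≤ r := by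
    refine nonneg_of_forall_lt_add_mul (a := r * c) (e := e) fun t ht => ?_
    have := h (z₀ + (t / ⟪v, v⟫) • v) (by
      rw [inner_add_left, hz₀, real_inner_smul_left, div_mul_cancel₀ _ hvv]; linarith)
    rw [hg, real_inner_smul_right, inner_add_left, hz₀, real_inner_smul_left,
      div_mul_cancel₀ _ hvv] at this
    linarith
  refine ⟨r, hr, hg, ?_⟩
  simpa [hg, real_inner_smul_right, hz₀, mul_comm] using h z₀ hz₀.ge

theorem exists_finset_sq_norm_le_abs_inner {ι : Type*} [Fintype ι] (x : E) (s c : ι → E) :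
    ∃ S : Finset ι, ∀ i, ‖s i‖ ^ 2 ≤ 2 * |⟪x + ∑ j ∈ S, s j - c i, s i⟫| := by
  classical
  obtain ⟨S, hS⟩ := Finite.exists_max fun S : Finset ι =>
    ‖x + ∑ j ∈ S, s j‖ ^ 2 - 2 * ∑ j ∈ S, ⟪c j, s j⟫
  refine ⟨S, fun i => ?_⟩
  by_cases hi : i ∈ S
  · have hy : x + ∑ j ∈ S, s j = (x + ∑ j ∈ S.erase i, s j) + s i := by
      rw [← Finset.sum_erase_add S s hi, add_assoc]
    have h := hS (S.erase i)
    rw [hy, ← Finset.sum_erase_add S _ hi, norm_add_sq_real (x + ∑ j ∈ S.erase i, s j)] at h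
    rw [hy, inner_sub_left, inner_add_left, real_inner_self_eq_norm_sq]
    linarith [le_abs_self (⟪x + ∑ j ∈ S.erase i, s j, s i⟫ + ‖s i‖ ^ 2 - ⟪c i, s i⟫)]
  · have hy : x + ∑ j ∈ insert i S, s j = (x + ∑ j ∈ S, s j) + s i := by
      rw [Finset.sum_insert hi, add_comm (s i), add_assoc]
    have h := hS (insert i S)
    rw [hy, Finset.sum_insert hi, norm_add_sq_real] at h
    rw [inner_sub_left]
    linarith [neg_abs_le (⟪x + ∑ j ∈ S, s j, s i⟫ - ⟪c i, s i⟫)]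

section Complete

variable [CompleteSpace E]

theorem inter_preimage_add_nonempty (hK : IsCompact K) (hconv : Convex ℝ K) (hne : K.Nonempty)
    {ω : ℝ} (hw : ∀ u : E, ‖u‖ = 1 → ω ≤ width K u) {s : E} (hs : ‖s‖ < ω) :
    (K ∩ (· + s) ⁻¹' K).Nonempty := by
  by_contra hempty
  obtain ⟨f, u₁, u₂, hfK, hu, hfB⟩ := geometric_hahn_banach_compact_closed hconv hK
    (hconv.translate_preimage_left s) (hK.preimage_add_right s).isClosed
    (disjoint_iff_inter_eq_empty.2 (not_nonempty_iff_eq_empty.1 hempty))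
  set g := (InnerProductSpace.toDual ℝ E).symm f
  have hf : ∀ x, f x = ⟪x, g⟫ := fun x => by
    rw [real_inner_comm, InnerProductSpace.toDual_symm_apply]
  have h₁ : supportFun K g ≤ u₁ := supportFun_le hne fun x hx => (hf x ▸ hfK x hx).le
  have h₂ : supportFun K (-g) ≤ -u₂ - ⟪s, g⟫ := supportFun_le hne fun x hx => by
    have := hf _ ▸ hfB (x - s) (by simpa using hx)
    rw [inner_sub_left] at this
    rw [inner_neg_right]
    linarith
  have h₃ := (abs_le.1 (abs_real_inner_le_norm s g)).1
  have h₄ := mul_norm_le_width hw g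
  rw [width] at h₄
  nlinarith [norm_nonneg g]

theorem exists_add_eq_and_supportFun_add_lt {B : Set E} (hK : IsCompact K) (hKconv : Convex ℝ K)
    (hB : IsCompact B) (hBconv : Convex ℝ B) (hKB : (K ∩ B).Nonempty) {v : E} (hv : v ≠ 0)
    {c : ℝ} (hc : supportFun (K ∩ B) v < c) :
    ∃ a b, a + b = v ∧ supportFun K a + supportFun B b < c := by
  -- A functional separating `K × B` from `T` reads `⟪x, a₀⟫ + ⟪y, b₀⟫`; being bounded below on
  -- the half-space `T` of the diagonal forces `a₀ + b₀` to be a positive multiple of `v`.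
  set T := {p : E × E | p.1 = p.2 ∧ c ≤ ⟪p.1, v⟫}
  have hTclosed : IsClosed T := show IsClosed ({p : E × E | p.1 = p.2} ∩ {p | c ≤ ⟪p.1, v⟫}) from
    (isClosed_eq continuous_fst continuous_snd).inter
    (isClosed_le continuous_const (continuous_fst.inner continuous_const))
  have hTconv : Convex ℝ T := by
    rintro p ⟨hp, hpv⟩ q ⟨hq, hqv⟩ a b ha hb hab
    refine ⟨by simp [hp, hq], ?_⟩
    simp only [Prod.fst_add, Prod.smul_fst, inner_add_left, real_inner_smul_left]
    have : a * c + b * c = c := by rw [← add_mul, hab, one_mul]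
    linarith [mul_le_mul_of_nonneg_left hpv ha, mul_le_mul_of_nonneg_left hqv hb]
  have hdisj : Disjoint (K ×ˢ B) T := by
    refine disjoint_left.2 fun p hp ⟨hpeq, hpv⟩ => ?_
    have : p.1 ∈ K ∩ B := ⟨hp.1, hpeq ▸ hp.2⟩
    linarith [inner_le_supportFun (hK.inter_right hB.isClosed) this v]
  obtain ⟨f, u₁, u₂, hfKB, hu, hfT⟩ := geometric_hahn_banach_compact_closed
    (hKconv.prod hBconv) (hK.prod hB) hTconv hTclosed hdisj
  set a₀ := (InnerProductSpace.toDual ℝ E).symm (f.comp (.inl ℝ E E))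
  set b₀ := (InnerProductSpace.toDual ℝ E).symm (f.comp (.inr ℝ E E))
  have hf : ∀ x y, f (x, y) = ⟪x, a₀⟫ + ⟪y, b₀⟫ := fun x y => by
    rw [real_inner_comm a₀, real_inner_comm b₀, InnerProductSpace.toDual_symm_apply,
      InnerProductSpace.toDual_symm_apply, ContinuousLinearMap.comp_apply,
      ContinuousLinearMap.comp_apply, ← map_add]
    simp
  obtain ⟨r, hr, hsmul, hrc⟩ := exists_nonneg_eq_smul_of_lt_inner hv (g := a₀ + b₀) fun z hz => by
    simpa [inner_add_right, hf] using hfT (z, z) ⟨rfl, hz⟩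
  have hsum : supportFun K a₀ + supportFun B b₀ ≤ u₁ := by
    obtain ⟨x₀, hx₀⟩ := hKB
    refine le_sub_iff_add_le'.1 (supportFun_le ⟨x₀, hx₀.2⟩ fun y hy => ?_)
    refine le_sub_comm.1 (supportFun_le ⟨x₀, hx₀.1⟩ fun x hx => ?_)
    linarith [hf x y ▸ hfKB (x, y) ⟨hx, hy⟩]
  have hrpos : 0 < r := by
    refine hr.lt_of_ne fun hr0 => ?_
    subst hr0
    obtain ⟨x, hx⟩ := hKB
    have := hf x x ▸ hfKB (x, x) hx
    rw [← inner_add_right, hsmul, zero_smul, inner_zero_right] at this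
    linarith
  refine ⟨r⁻¹ • a₀, r⁻¹ • b₀, by rw [← smul_add, hsmul, inv_smul_smul₀ hrpos.ne'], ?_⟩
  rw [supportFun_smul K (inv_nonneg.2 hr), supportFun_smul B (inv_nonneg.2 hr), ← mul_add,
    inv_mul_lt_iff₀ hrpos]
  linarith

theorem width_inter_preimage_add_ge (hK : IsCompact K) (hconv : Convex ℝ K) (hne : K.Nonempty)
    {ω : ℝ} (hw : ∀ u : E, ‖u‖ = 1 → ω ≤ width K u) {s : E} (hs : ‖s‖ < ω) {v : E}
    (hv : ‖v‖ = 1) : ω - ‖s‖ ≤ width (K ∩ (· + s) ⁻¹' K) v := by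
  have hv0 : v ≠ 0 := by rintro rfl; simp at hv
  have hL := inter_preimage_add_nonempty hK hconv hne hw hs
  have decomp (y : E) (hy : y ≠ 0) {ε : ℝ} (hε : 0 < ε) := exists_add_eq_and_supportFun_add_lt hK
    hconv (hK.preimage_add_right s) (hconv.translate_preimage_left s) hL hy
    (lt_add_of_pos_right (supportFun (K ∩ (· + s) ⁻¹' K) y) hε)
  refine le_of_forall_pos_lt_add fun ε hε => ?_
  obtain ⟨a, b, hab, h₁⟩ := decomp v hv0 (half_pos hε)
  obtain ⟨a', b', hab', h₂⟩ := decomp (-v) (neg_ne_zero.2 hv0) (half_pos hε)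
  rw [supportFun_preimage_add hK hne] at h₁ h₂
  -- The four support values bound both `width K v ≥ ω` and `width K (a + a') ≥ ω ‖a + a'‖`,
  -- while the translation costs `⟪s, a + a'⟫ ≥ -‖s‖ ‖a + a'‖`.
  have hbb' : b + b' = -(a + a') := by linear_combination (norm := module) hab + hab'
  have hKv : width K v ≤ supportFun K a + supportFun K b + supportFun K a' + supportFun K b' := by
    have h := supportFun_add_le hK hne a b
    have h' := supportFun_add_le hK hne a' b'
    rw [hab] at h
    rw [hab'] at h'
    rw [width]
    linarith
  have hKp : width K (a + a') ≤
      supportFun K a + supportFun K b + supportFun K a' + supportFun K b' := by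
    have h := supportFun_add_le hK hne b b'
    rw [hbb'] at h
    rw [width]
    linarith [supportFun_add_le hK hne a a']
  have hsp : ⟪s, b⟫ + ⟪s, b'⟫ = -⟪s, a + a'⟫ := by rw [← inner_add_right, hbb', inner_neg_right]
  have hω := hw v hv
  have hωp := mul_norm_le_width hw (a + a')
  have hinner := (abs_le.1 (abs_real_inner_le_norm s (a + a'))).1
  rw [width]
  rcases le_total ‖a + a'‖ 1 with hp | hp <;> nlinarith [norm_nonneg s]

theorem exists_add_sum_mem {ι : Type*} (s : ι → E) (T : Finset ι) {ω : ℝ}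
    (hK : IsCompact K) (hconv : Convex ℝ K) (hne : K.Nonempty)
    (hw : ∀ u : E, ‖u‖ = 1 → ω ≤ width K u) (hT : ∑ i ∈ T, ‖s i‖ < ω) :
    ∃ x, ∀ S ⊆ T, x + ∑ i ∈ S, s i ∈ K := by
  classical
  induction T using Finset.induction_on generalizing K ω with
  | empty =>
    obtain ⟨x, hx⟩ := hne
    exact ⟨x, fun S hS => by simpa [Finset.subset_empty.1 hS] using hx⟩
  | insert a T ha ih =>
    rw [Finset.sum_insert ha] at hT
    have hsa : ‖s a‖ < ω := by linarith [Finset.sum_nonneg fun i (_ : i ∈ T) => norm_nonneg (s i)]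
    obtain ⟨x, hx⟩ := ih (hK.inter_right (hK.preimage_add_right (s a)).isClosed)
      (hconv.inter (hconv.translate_preimage_left (s a)))
      (inter_preimage_add_nonempty hK hconv hne hw hsa)
      (fun v hv => width_inter_preimage_add_ge hK hconv hne hw hsa hv) (by linarith)
    refine ⟨x, fun S hS => ?_⟩
    by_cases haS : a ∈ S
    · rw [← Finset.sum_erase_add S s haS, ← add_assoc]
      exact (hx _ (Finset.subset_insert_iff.1 hS)).2
    · exact (hx S ((Finset.subset_insert_iff_of_notMem haS).1 hS)).1

end Complete

end InnerProductSpace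

theorem dirWidth_eq_width {d : ℕ} (C : Set (EuclideanSpace ℝ (Fin d)))
    (u : EuclideanSpace ℝ (Fin d)) : dirWidth C u = width C u := by
  have : (fun x => ⟪x, -u⟫) '' C = -((fun x => ⟪x, u⟫) '' C) := by
    rw [← image_neg_eq_neg, image_image]
    simp only [inner_neg_right]
  rw [dirWidth, width, supportFun, supportFun, this, Real.sSup_neg, sub_eq_add_neg]

theorem minWidth_empty {d : ℕ} : minWidth (∅ : Set (EuclideanSpace ℝ (Fin d))) = 0 := by
  simp [minWidth, dirWidth]

theorem minWidth_le_width {d : ℕ} {C : Set (EuclideanSpace ℝ (Fin d))} (hC : IsCompact C)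
    (hne : C.Nonempty) {u : EuclideanSpace ℝ (Fin d)} (hu : ‖u‖ = 1) :
    minWidth C ≤ width C u := by
  rw [← dirWidth_eq_width]
  refine ciInf_le ⟨0, forall_mem_range.2 fun v => ?_⟩ (⟨u, hu⟩ : {v // ‖v‖ = 1})
  rw [dirWidth_eq_width]
  exact width_nonneg hC hne _

theorem bang_plank_theorem_general {d n : ℕ} (C : Set (EuclideanSpace ℝ (Fin d)))
    (hC : IsCompact C) (hCconv : Convex ℝ C)
    (P : Fin n → Set (EuclideanSpace ℝ (Fin d))) (w : Fin n → ℝ)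
    (hP : ∀ i, IsPlank (P i) (w i)) (hcover : C ⊆ ⋃ i, P i) :
    minWidth C ≤ ∑ i, w i := by
  rcases C.eq_empty_or_nonempty with rfl | hne
  · rw [minWidth_empty]
    exact Finset.sum_nonneg fun i _ => (hP i).1.le
  by_contra! hlt
  choose u c hu hPc using fun i => (hP i).2
  obtain ⟨δ, hδ, hsum⟩ := exists_pos_sum_add_lt hlt
  have hwδ : ∀ i, 0 < w i + δ := fun i => by linarith [(hP i).1]
  have hnorm : ∀ i, ‖(w i + δ) • u i‖ = w i + δ := fun i => by
    rw [norm_smul, hu, mul_one, Real.norm_of_nonneg (hwδ i).le]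
  obtain ⟨x, hx⟩ := exists_add_sum_mem (fun i => (w i + δ) • u i) Finset.univ hC hCconv hne
    (fun v hv => minWidth_le_width hC hne hv) (by simpa only [hnorm] using hsum)
  obtain ⟨S, hS⟩ := exists_finset_sq_norm_le_abs_inner x (fun i => (w i + δ) • u i) c
  obtain ⟨i, hi⟩ := mem_iUnion.1 (hcover (hx S S.subset_univ))
  have h := hS i
  rw [hPc i, mem_ofPred_eq] at hi
  rw [hnorm, real_inner_smul_right, abs_mul, abs_of_pos (hwδ i)] at h
  nlinarith [hwδ i]

/-- **Bang's plank theorem.** If a convex body `C` in `ℝ^d` is covered by finitely many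
planks, then the sum of the widths of the planks is at least the minimal width of `C`. -/
theorem bang_plank_theorem {d n : ℕ} (C : Set (EuclideanSpace ℝ (Fin d)))
    (hC : IsCompact C) (hCconv : Convex ℝ C) (hCint : (interior C).Nonempty)
    (P : Fin n → Set (EuclideanSpace ℝ (Fin d))) (w : Fin n → ℝ)
    (hP : ∀ i, IsPlank (P i) (w i)) (hcover : C ⊆ ⋃ i, P i) :
    minWidth C ≤ ∑ i, w i :=
  bang_plank_theorem_general C hC hCconv P w hP hcover
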